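/- arXiv:2410.06177 — 3 statements merged into one kernel-verified Lean document; each statement's English description precedes it below -/
import Mathlib

section
/- For every n ≥ 1 and every prime power q of odd characteristic, the number of lines V ∈ Gr_{1,n}(F_q) all of whose Plücker coordinates (i.e., the entries of a spanning row vector in reduced row echelon form) are squares in F_q equals the sum over i = 0 to n−1 of ((q+1)/2)^i. -/
/-!
Rescaling a nonzero vector by the inverse of its first nonzero entry gives the unique spanning
vector of its line whose first nonzero entry is `1`; when the entries are squares this inverse is
a square, so the rescaled entries stay squares. Such vectors are determined by the pivot position
`k` and the `n - 1 - k` square entries after it, which gives `∑ₖ s ^ (n - 1 - k)` with `s` the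
number of squares. Finally `2 · [a is a square] = 1 + χ(a) + [a = 0]` for the quadratic character
`χ`, and `∑ χ = 0` turns this into `2 s = q + 1`.
-/

open Finset Submodule

section LeadingOne

variable {R : Type*} {n : ℕ}

/-- `v` is the reduced row echelon form of a nonzero row vector, with pivot `k`. -/
def IsLeadingOne [Zero R] [One R] (v : Fin n → R) (k : Fin n) : Prop :=
  v k = 1 ∧ ∀ j < k, v j = 0

theorem IsLeadingOne.unique [Zero R] [One R] [NeZero (1 : R)] {v : Fin n → R} {k l : Fin n}
    (hk : IsLeadingOne v k) (hl : IsLeadingOne v l) : k = l := by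
  by_contra hne
  rcases lt_or_gt_of_ne hne with h | h
  · exact one_ne_zero (hk.1 ▸ hl.2 k h)
  · exact one_ne_zero (hl.1 ▸ hk.2 l h)

theorem IsLeadingOne.ne_zero [Zero R] [One R] [NeZero (1 : R)] {v : Fin n → R} {k : Fin n}
    (hk : IsLeadingOne v k) : v ≠ 0 :=
  fun h => one_ne_zero (hk.1 ▸ congrFun h k)

theorem IsLeadingOne.eq_one_of_smul [MulZeroOneClass R] [NeZero (1 : R)] {v : Fin n → R}
    {c : R} {k l : Fin n} (hv : IsLeadingOne v k) (hcv : IsLeadingOne (c • v) l) : c = 1 := by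
  have hcv_apply (j : Fin n) : (c • v) j = c * v j := rfl
  rcases lt_trichotomy k l with h | rfl | h
  · have hc : c = 0 := by simpa [hcv_apply, hv.1] using hcv.2 k h
    exact absurd hcv.1 (by simp [hc])
  · simpa [hcv_apply, hv.1] using hcv.1
  · exact absurd hcv.1 (by simp [hcv_apply, hv.2 l h])

theorem exists_isLeadingOne_inv_smul [GroupWithZero R] {v : Fin n → R} (hv : v ≠ 0) :
    ∃ k, v k ≠ 0 ∧ IsLeadingOne ((v k)⁻¹ • v) k := by
  obtain ⟨k, hk, hmin⟩ := wellFounded_lt.has_min {i | v i ≠ 0} (Function.ne_iff.mp hv)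
  refine ⟨k, hk, by simp [inv_mul_cancel₀ hk], fun j hj => ?_⟩
  have : v j = 0 := not_not.mp fun hj' => hmin j hj' hj
  simp [this]

variable [Zero R] [One R]

def extendLeadingOne (k : Fin n) (f : Set.Ioi k → R) : Fin n → R :=
  fun j => if h : k < j then f ⟨j, h⟩ else if j = k then 1 else 0

theorem isLeadingOne_extendLeadingOne (k : Fin n) (f : Set.Ioi k → R) :
    IsLeadingOne (extendLeadingOne k f) k := by
  refine ⟨by simp [extendLeadingOne], fun j hj => ?_⟩
  simp [extendLeadingOne, hj.not_gt, hj.ne]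

theorem extendLeadingOne_apply_of_lt {k j : Fin n} (f : Set.Ioi k → R) (h : k < j) :
    extendLeadingOne k f j = f ⟨j, h⟩ :=
  dif_pos h

theorem IsLeadingOne.extendLeadingOne_eq {v : Fin n → R} {k : Fin n} (hk : IsLeadingOne v k) :
    extendLeadingOne k (fun j => v j) = v := by
  funext j
  rcases lt_trichotomy j k with h | rfl | h
  · simp [extendLeadingOne, h.not_gt, h.ne, hk.2 j h]
  · simp [extendLeadingOne, hk.1]
  · exact extendLeadingOne_apply_of_lt _ h

theorem extendLeadingOne_mem {S : Set R} (h0 : (0 : R) ∈ S) (h1 : (1 : R) ∈ S) {k : Fin n}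
    (f : Set.Ioi k → S) (i : Fin n) : extendLeadingOne k (fun j => (f j : R)) i ∈ S := by
  unfold extendLeadingOne
  split_ifs
  exacts [(f _).2, h1, h0]

variable [NeZero (1 : R)]

noncomputable def sigmaEquivLeadingOne (S : Set R) (h0 : (0 : R) ∈ S) (h1 : (1 : R) ∈ S) :
    (Σ k : Fin n, (Set.Ioi k → S)) ≃
      {v : Fin n → R // (∃ k, IsLeadingOne v k) ∧ ∀ i, v i ∈ S} :=
  Equiv.ofBijective
    (fun x => ⟨extendLeadingOne x.1 (fun j => x.2 j),
      ⟨x.1, isLeadingOne_extendLeadingOne _ _⟩, extendLeadingOne_mem h0 h1 x.2⟩)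
    ⟨by
      rintro ⟨k, f⟩ ⟨l, g⟩ hfg
      have hv : extendLeadingOne k (fun j => (f j : R)) = extendLeadingOne l (fun j => (g j : R)) :=
        congrArg Subtype.val hfg
      obtain rfl : k = l := (isLeadingOne_extendLeadingOne k _).unique
        (hv ▸ isLeadingOne_extendLeadingOne l _)
      congr
      funext j
      exact Subtype.ext (by simpa [extendLeadingOne_apply_of_lt _ j.2] using congrFun hv j),
    by
      rintro ⟨v, ⟨k, hk⟩, hS⟩
      exact ⟨⟨k, fun j => ⟨v j, hS j⟩⟩, Subtype.ext hk.extendLeadingOne_eq⟩⟩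

theorem card_leadingOne_vectors (S : Set R) [Finite S] (h0 : (0 : R) ∈ S) (h1 : (1 : R) ∈ S) :
    Nat.card {v : Fin n → R // (∃ k, IsLeadingOne v k) ∧ ∀ i, v i ∈ S} =
      ∑ i ∈ range n, Nat.card S ^ i := by
  have hIoi (k : Fin n) : Nat.card (Set.Ioi k) = n - 1 - k := by
    rw [Nat.card_eq_card_toFinset, Set.toFinset_Ioi, Fin.card_Ioi]
  rw [← Nat.card_congr (sigmaEquivLeadingOne S h0 h1), Nat.card_sigma]
  simp only [Nat.card_fun, hIoi]
  rw [Fin.sum_univ_eq_sum_range (fun i => Nat.card S ^ (n - 1 - i)), sum_range_reflect]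

end LeadingOne

section Lines

variable {F : Type*} [Field F] {n : ℕ}

theorem card_squareLines_eq_card_leadingOne_vectors :
    Nat.card {V : Submodule F (Fin n → F) //
        Module.finrank F V = 1 ∧
        ∃ v : Fin n → F, V = span F {v} ∧ ∀ i, ∃ x : F, x ^ 2 = v i} =
      Nat.card {v : Fin n → F //
        (∃ k, IsLeadingOne v k) ∧ ∀ i, v i ∈ {a : F | IsSquare a}} := by
  refine (Nat.card_eq_of_bijective
    (fun v => ⟨span F {v.1}, finrank_span_singleton (v.2.1.elim fun _ hk => hk.ne_zero), v.1, rfl,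
      fun i => ((isSquare_iff_exists_sq _).mp (v.2.2 i)).imp fun _ => Eq.symm⟩) ⟨?_, ?_⟩).symm
  · intro v w hvw
    obtain ⟨c, hc⟩ := span_singleton_eq_span_singleton.mp (congrArg Subtype.val hvw)
    obtain ⟨k, hk⟩ := v.2.1
    obtain ⟨l, hl⟩ := w.2.1
    have hc1 : (c : F) = 1 := hk.eq_one_of_smul (hc ▸ hl)
    exact Subtype.ext (by rw [← hc, Units.smul_def, hc1, one_smul])
  · rintro ⟨V, hV, v, rfl, hx⟩
    have hv : v ≠ 0 := by
      rintro rfl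
      rw [Set.singleton_zero, span_zero, finrank_bot] at hV
      exact zero_ne_one hV
    obtain ⟨k, hvk, hk⟩ := exists_isLeadingOne_inv_smul hv
    have hsq (i : Fin n) : IsSquare (v i) :=
      (isSquare_iff_exists_sq _).mpr ((hx i).imp fun _ => Eq.symm)
    exact ⟨⟨(v k)⁻¹ • v, ⟨k, hk⟩, fun i => (hsq k).inv.mul (hsq i)⟩,
      Subtype.ext (span_singleton_smul_eq (inv_ne_zero hvk).isUnit v)⟩

end Lines

theorem FiniteField.card_isSquare {F : Type*} [Field F] [Fintype F] (hF : ringChar F ≠ 2) :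
    Nat.card {a : F // IsSquare a} = (Fintype.card F + 1) / 2 := by
  classical
  have key (a : F) :
      2 * (if IsSquare a then 1 else 0 : ℤ) = 1 + quadraticChar F a + if a = 0 then 1 else 0 := by
    by_cases ha : a = 0
    · simp [ha]
    by_cases hsq : IsSquare a
    · simp [ha, hsq, (quadraticChar_one_iff_isSquare ha).mpr hsq]
    · simp [ha, hsq, quadraticChar_neg_one_iff_not_isSquare.mpr hsq]
  have hsum := sum_congr rfl fun a (_ : a ∈ univ) => key a
  rw [← mul_sum, sum_add_distrib, sum_add_distrib, quadraticChar_sum_zero hF, sum_ite_eq',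
    if_pos (mem_univ _), sum_boole, sum_const, card_univ, nsmul_one, add_zero] at hsum
  rw [Nat.card_eq_fintype_card, Fintype.card_subtype]
  omega

theorem stmt_7_general (F : Type*) [Field F] [Fintype F] (p r : ℕ) (hodd : Odd p)
    (hcard : Fintype.card F = p ^ r) (n : ℕ) :
    Nat.card {V : Submodule F (Fin n → F) //
        Module.finrank F V = 1 ∧
        ∃ v : Fin n → F, V = Submodule.span F {v} ∧ ∀ i, ∃ x : F, x ^ 2 = v i} =
      ∑ i ∈ Finset.range n, ((Fintype.card F + 1) / 2) ^ i := by
  have hF : ringChar F ≠ 2 := by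
    have := Nat.odd_iff.mp (hcard ▸ hodd.pow : Odd (Fintype.card F))
    rw [Ne, FiniteField.even_card_iff_char_two]
    omega
  rw [card_squareLines_eq_card_leadingOne_vectors,
    card_leadingOne_vectors _ IsSquare.zero IsSquare.one, Set.coe_ofPred,
    FiniteField.card_isSquare hF]

/-- The number of totally nonnegative lines in `F_q^n` (lines spanned by a vector all
of whose entries are squares) is `∑_{i=0}^{n-1} ((q+1)/2)^i`. -/
theorem stmt_7 (F : Type*) [Field F] [Fintype F] (p r : ℕ) (hp : p.Prime) (hodd : Odd p)
    (hr : 0 < r) (hcard : Fintype.card F = p ^ r) (n : ℕ) (hn : 1 ≤ n) :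
    Nat.card {V : Submodule F (Fin n → F) //
        Module.finrank F V = 1 ∧
        ∃ v : Fin n → F, V = Submodule.span F {v} ∧ ∀ i, ∃ x : F, x ^ 2 = v i} =
      ∑ i ∈ Finset.range n, ((Fintype.card F + 1) / 2) ^ i :=
  stmt_7_general F p r hodd hcard n
end

section
/- For every n ≥ 0, the coefficient of x^n in the Chebyshev polynomial of the first kind T_{n+6}(x) equals −2^{n−2}(n+1)(n+2)(n+6)/3. -/
/-!
Write `c k n` for the coefficient of `X ^ n` in `T (n + 2k)`. Comparing coefficients of
`X ^ (n + 1)` in `T (j + 2) = 2 X T (j + 1) - T j` gives `c (k+1) (n+1) = 2 c (k+1) n - c k (n+1)`.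
The leading coefficients `c 0 (n + 1) = 2 ^ n` and the constant terms `c k 0 = (-1) ^ k` determine
`c 1`, `c 2` and `c 3` in turn, each by induction on `n`.
-/

namespace Polynomial.Chebyshev

theorem coeff_T_add_two_succ (R : Type*) [CommRing R] (j : ℤ) (m : ℕ) :
    (T R (j + 2)).coeff (m + 1) = 2 * (T R (j + 1)).coeff m - (T R j).coeff (m + 1) := by
  rw [T_add_two, coeff_sub, mul_assoc, ← C_ofNat, coeff_C_mul, coeff_X_mul]

noncomputable def coeffBelowLeading (R : Type*) [CommRing R] (k n : ℕ) : R :=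
  (T R ((n : ℤ) + 2 * k)).coeff n

theorem coeffBelowLeading_succ_succ (R : Type*) [CommRing R] (k n : ℕ) :
    coeffBelowLeading R (k + 1) (n + 1) =
      2 * coeffBelowLeading R (k + 1) n - coeffBelowLeading R k (n + 1) := by
  have e₁ : ((n + 1 : ℕ) : ℤ) + 2 * ((k + 1 : ℕ) : ℤ) = (n + 2 * k + 1) + 2 := by push_cast; ring
  have e₂ : (n : ℤ) + 2 * ((k + 1 : ℕ) : ℤ) = (n + 2 * k + 1) + 1 := by push_cast; ring
  have e₃ : ((n + 1 : ℕ) : ℤ) + 2 * (k : ℤ) = n + 2 * k + 1 := by push_cast; ring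
  rw [coeffBelowLeading, coeffBelowLeading, coeffBelowLeading, e₁, e₂, e₃]
  exact coeff_T_add_two_succ R _ n

theorem coeffBelowLeading_zero_right (R : Type*) [CommRing R] (k : ℕ) :
    coeffBelowLeading R k 0 = (-1) ^ k := by
  simp [coeffBelowLeading, coeff_zero_eq_eval_zero, Int.negOnePow_def]

theorem coeffBelowLeading_zero_left_succ (R : Type*) [CommRing R] [IsDomain R] [NeZero (2 : R)]
    (n : ℕ) : coeffBelowLeading R 0 (n + 1) = 2 ^ n := by
  have h := leadingCoeff_T R ((n + 1 : ℕ) : ℤ)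
  rw [leadingCoeff, natDegree_T, Int.natAbs_natCast] at h
  simpa [coeffBelowLeading] using h

variable {K : Type*} [Field K] [CharZero K]

theorem coeffBelowLeading_one (n : ℕ) :
    coeffBelowLeading K 1 n = -((n + 2) * 2 ^ n / 2) := by
  induction n with
  | zero => norm_num [coeffBelowLeading_zero_right]
  | succ n ih =>
    rw [coeffBelowLeading_succ_succ, ih, coeffBelowLeading_zero_left_succ]
    push_cast; ring

theorem coeffBelowLeading_two (n : ℕ) :
    coeffBelowLeading K 2 n = (n + 4) * (n + 1) * 2 ^ n / 4 := by
  induction n with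
  | zero => norm_num [coeffBelowLeading_zero_right]
  | succ n ih =>
    rw [coeffBelowLeading_succ_succ, ih, coeffBelowLeading_one]
    push_cast; ring

theorem coeffBelowLeading_three (n : ℕ) :
    coeffBelowLeading K 3 n = -((n + 1) * (n + 2) * (n + 6) * 2 ^ n / 12) := by
  induction n with
  | zero => norm_num [coeffBelowLeading_zero_right]
  | succ n ih =>
    rw [coeffBelowLeading_succ_succ, ih, coeffBelowLeading_two]
    push_cast; ring

end Polynomial.Chebyshev

open Polynomial.Chebyshev

/-- The coefficient of `x^n` in the Chebyshev polynomial `T_{n+6}` equals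
`-2^(n-2)(n+1)(n+2)(n+6)/3`. -/
theorem stmt_10 (n : ℕ) :
    (Polynomial.Chebyshev.T ℚ ((n : ℤ) + 6)).coeff n =
      -((2 : ℚ) ^ ((n : ℤ) - 2) * (n + 1) * (n + 2) * (n + 6) / 3) := by
  have h : (T ℚ ((n : ℤ) + 6)).coeff n = -((n + 1) * (n + 2) * (n + 6) * 2 ^ n / 12) := by
    simpa [coeffBelowLeading] using coeffBelowLeading_three (K := ℚ) n
  rw [h, zpow_sub₀ two_ne_zero, zpow_natCast]
  ring
end

section
/- For every n ≥ 2, the sum over 1 ≤ i < j ≤ n of 3^{j−i−1}·5^{n−j}, plus the sum over 1 ≤ i < j < ℓ ≤ n of 4·3^{j−i−1}·5^{ℓ−j−1}·7^{n−ℓ}, equals (2·7^n − 3·5^n + 1)/24. -/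
/-!
Group every chain `i < j (< l) ≤ n` by its largest index. With
`geomConv b F n = ∑_{j=1}^{n} F (j-1) b^(n-j)`, which obeys
`geomConv b F (n+1) = b · geomConv b F n + F n`, the double sum becomes
`geomConv 5 (geomConv 3 1)` and the triple sum `4 · geomConv 7 (geomConv 5 (geomConv 3 1))`.
The recursion gives the closed forms `(3^n-1)/2`, `(5^n-2·3^n+1)/8` and
`(7^n-3·5^n+3·3^n-1)/48` of these iterates by induction.
-/

open Finset

theorem Finset.sum_Ioc_sum_Ioc_comm {M : Type*} [AddCommMonoid M] (a n : ℕ) (f : ℕ → ℕ → M) :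
    ∑ i ∈ Ioc a n, ∑ j ∈ Ioc i n, f i j = ∑ j ∈ Ioc a n, ∑ i ∈ Ioc a (j - 1), f i j :=
  sum_comm' fun i j => by simp only [mem_Ioc]; omega

theorem Finset.sum_Icc_one_sum_Ioc_comm {M : Type*} [AddCommMonoid M] (n : ℕ) (f : ℕ → ℕ → M) :
    ∑ i ∈ Icc 1 n, ∑ j ∈ Ioc i n, f i j = ∑ j ∈ Icc 1 n, ∑ i ∈ Icc 1 (j - 1), f i j :=
  sum_comm' fun i j => by simp only [mem_Icc, mem_Ioc]; omega

section GeomConv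

variable {R : Type*} [CommSemiring R]

def geomConv (b : R) (F : ℕ → R) (n : ℕ) : R :=
  ∑ j ∈ Icc 1 n, F (j - 1) * b ^ (n - j)

@[simp]
theorem geomConv_zero (b : R) (F : ℕ → R) : geomConv b F 0 = 0 := by
  simp [geomConv]

theorem geomConv_succ (b : R) (F : ℕ → R) (n : ℕ) :
    geomConv b F (n + 1) = b * geomConv b F n + F n := by
  rw [geomConv, sum_Icc_succ_top (by omega), geomConv, mul_sum, Nat.add_sub_cancel, Nat.sub_self,
    pow_zero, mul_one]
  congr 1
  refine sum_congr rfl fun j hj => ?_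
  rw [show n + 1 - j = n - j + 1 by simp only [mem_Icc] at hj; omega, pow_succ]
  ring

theorem sum_pairs_eq_geomConv (a b : R) (n : ℕ) :
    ∑ i ∈ Icc 1 n, ∑ j ∈ Ioc i n, a ^ (j - i - 1) * b ^ (n - j) =
      geomConv b (geomConv a fun _ => 1) n := by
  rw [sum_Icc_one_sum_Ioc_comm, geomConv]
  refine sum_congr rfl fun j _ => ?_
  rw [geomConv, sum_mul]
  simp only [one_mul, Nat.sub_right_comm _ 1]

theorem sum_triples_eq_geomConv (a b c : R) (n : ℕ) :
    ∑ i ∈ Icc 1 n, ∑ j ∈ Ioc i n, ∑ l ∈ Ioc j n, a ^ (j - i - 1) * b ^ (l - j - 1) * c ^ (n - l) =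
      geomConv c (geomConv b (geomConv a fun _ => 1)) n := by
  simp only [sum_Ioc_sum_Ioc_comm _ n]
  rw [sum_Icc_one_sum_Ioc_comm, geomConv]
  refine sum_congr rfl fun l _ => ?_
  rw [← sum_pairs_eq_geomConv, sum_mul]
  refine sum_congr rfl fun i _ => ?_
  rw [sum_mul]
  simp only [Nat.sub_right_comm l 1]

end GeomConv

theorem geomConv_three_one (n : ℕ) : geomConv (3 : ℚ) (fun _ => 1) n = (3 ^ n - 1) / 2 := by
  induction n with
  | zero => simp
  | succ n ih => rw [geomConv_succ, ih]; ring

theorem geomConv_five_three_one (n : ℕ) :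
    geomConv (5 : ℚ) (geomConv 3 fun _ => 1) n = (5 ^ n - 2 * 3 ^ n + 1) / 8 := by
  induction n with
  | zero => norm_num
  | succ n ih => rw [geomConv_succ, ih, geomConv_three_one]; ring

theorem geomConv_seven_five_three_one (n : ℕ) :
    geomConv (7 : ℚ) (geomConv 5 (geomConv 3 fun _ => 1)) n =
      (7 ^ n - 3 * 5 ^ n + 3 * 3 ^ n - 1) / 48 := by
  induction n with
  | zero => simp
  | succ n ih => rw [geomConv_succ, ih, geomConv_five_three_one]; ring

theorem stmt_14_general (n : ℕ) :
    (∑ i ∈ Finset.Icc 1 n, ∑ j ∈ Finset.Ioc i n,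
        (3 : ℚ) ^ (j - i - 1) * 5 ^ (n - j)) +
    (∑ i ∈ Finset.Icc 1 n, ∑ j ∈ Finset.Ioc i n, ∑ l ∈ Finset.Ioc j n,
        4 * (3 : ℚ) ^ (j - i - 1) * 5 ^ (l - j - 1) * 7 ^ (n - l)) =
      (2 * 7 ^ n - 3 * 5 ^ n + 1) / 24 := by
  simp only [mul_assoc (4 : ℚ), ← mul_sum]
  rw [sum_pairs_eq_geomConv, sum_triples_eq_geomConv, geomConv_five_three_one,
    geomConv_seven_five_three_one]
  ring

/-- Summation identity for the point count of `Gr_{2,n}^{≥0}(F_5)`. -/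
theorem stmt_14 (n : ℕ) (hn : 2 ≤ n) :
    (∑ i ∈ Finset.Icc 1 n, ∑ j ∈ Finset.Ioc i n,
        (3 : ℚ) ^ (j - i - 1) * 5 ^ (n - j)) +
    (∑ i ∈ Finset.Icc 1 n, ∑ j ∈ Finset.Ioc i n, ∑ l ∈ Finset.Ioc j n,
        4 * (3 : ℚ) ^ (j - i - 1) * 5 ^ (l - j - 1) * 7 ^ (n - l)) =
      (2 * 7 ^ n - 3 * 5 ^ n + 1) / 24 :=
  stmt_14_general n
end
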